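/- arXiv:2106.06679 — 5 statements merged into one kernel-verified Lean document; each statement's English description precedes it below -/
import Mathlib

section
/- If the quiddity sequence of a frieze pattern (over ℝ) contains p−1 consecutive entries equal to λ_p = 2·cos(π/p) for some integer p ≥ 3, say m_{0,2} = m_{1,3} = ⋯ = m_{p−2,p} = λ_p, then m_{0,p} = 0. Consequently such a sequence cannot be the quiddity sequence of an infinite frieze pattern all of whose entries beyond the boundary rows are positive. -/
/-!
Along the diagonal ending at `m j j = 0`, the frieze recursion with constant quiddity `x` is the
Chebyshev recursion, so `m (j - n) j = U_{n-1}(x)`. For `x = 2 cos θ` one has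
`U_{n-1}(x) sin θ = sin (n θ)`, which vanishes at `θ = π / p`, `n = p`; then `m 0 p = 0`
contradicts positivity of the entries beyond the boundary rows.
-/

open Real

noncomputable def chebAux : ℕ → ℝ → ℝ
  | 0, _ => 0
  | 1, _ => 1
  | n + 2, x => x * chebAux (n + 1) x - chebAux n x

/-- Normalized Chebyshev polynomial of the second kind: `chebU k x = U_k(x)` with
`U_{-1} = 0`, `U_0 = 1`, `U_k(x) = x·U_{k-1}(x) − U_{k-2}(x)`, extended to all
integer indices via `U_{-k-2} = -U_k`. -/
noncomputable def chebU (k : ℤ) (x : ℝ) : ℝ :=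
  if 0 ≤ k + 1 then chebAux (k + 1).toNat x else -chebAux (-(k + 1)).toNat x

lemma chebAux_two_mul_cos_mul_sin (θ : ℝ) (n : ℕ) :
    chebAux n (2 * cos θ) * sin θ = sin (n * θ) := by
  induction n using Nat.twoStepInduction with
  | zero => simp [chebAux]
  | one => simp [chebAux]
  | more n ih₀ ih₁ =>
    have hsucc : ((n + 2 : ℕ) : ℝ) * θ = ((n + 1 : ℕ) : ℝ) * θ + θ := by push_cast; ring
    have hpred : (n : ℝ) * θ = ((n + 1 : ℕ) : ℝ) * θ - θ := by push_cast; ring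
    rw [hpred, sin_sub] at ih₀
    rw [chebAux, hsucc, sin_add]
    linear_combination 2 * cos θ * ih₁ - ih₀

lemma chebAux_two_mul_cos_pi_div_self {n : ℕ} (hn : 2 ≤ n) :
    chebAux n (2 * cos (π / n)) = 0 := by
  have hn' : (2 : ℝ) ≤ n := by exact_mod_cast hn
  have hsin : sin (π / n) ≠ 0 := by
    refine (sin_pos_of_pos_of_lt_pi (by positivity) ?_).ne'
    rw [div_lt_iff₀ (by positivity)]
    nlinarith [pi_pos]
  have h := chebAux_two_mul_cos_mul_sin (π / n) n
  rw [mul_div_cancel₀ _ (by positivity), sin_pi] at h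
  exact (mul_eq_zero.mp h).resolve_right hsin

lemma frieze_eq_chebAux {m : ℤ → ℤ → ℝ} {x : ℝ} {j : ℤ} (h0 : m j j = 0) (h1 : m (j - 1) j = 1)
    (hrec : ∀ i : ℤ, i + 2 ≤ j → m i j = m i (i + 2) * m (i + 1) j - m (i + 2) j) (n : ℕ)
    (hq : ∀ i : ℤ, j - n ≤ i → i ≤ j - 2 → m i (i + 2) = x) :
    m (j - n) j = chebAux n x := by
  induction n using Nat.twoStepInduction with
  | zero => simpa [chebAux] using h0
  | one => simpa [chebAux] using h1
  | more n ih₀ ih₁ =>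
    have e₂ : j - ((n + 2 : ℕ) : ℤ) + 2 = j - n := by push_cast; ring
    have e₁ : j - ((n + 2 : ℕ) : ℤ) + 1 = j - ((n + 1 : ℕ) : ℤ) := by push_cast; ring
    rw [hrec _ (by omega), hq _ le_rfl (by omega), e₂, e₁,
      ih₁ fun i hi hi' => hq i (by omega) hi', ih₀ fun i hi hi' => hq i (by omega) hi']
    rfl

/-- If a quiddity sequence has p−1 consecutive entries lambda_p, then m_{0,p} = 0, so it
cannot be the quiddity sequence of an infinite frieze pattern with all positive entries
beyond the boundary rows. -/
theorem too_many_lambda_p (p : ℤ) (hp : 3 ≤ p) (m : ℤ → ℤ → ℝ)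
    (h0 : ∀ i : ℤ, m i i = 0) (h1 : ∀ i : ℤ, m i (i + 1) = 1)
    (hrec : ∀ i j : ℤ, i + 2 ≤ j → m i j = m i (i + 2) * m (i + 1) j - m (i + 2) j)
    (hq : ∀ i : ℤ, 0 ≤ i → i ≤ p - 2 → m i (i + 2) = 2 * Real.cos (Real.pi / p)) :
    m 0 p = 0 ∧ ¬ (∀ i j : ℤ, i + 2 ≤ j → 0 < m i j) := by
  lift p to ℕ using by omega with n
  have hdiag := frieze_eq_chebAux (h0 n) (by simpa using h1 (n - 1)) (fun i hi => hrec i n hi) n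
    (fun i hi hi' => hq i (by omega) hi')
  have hm0 : m 0 n = 0 := by
    rw [sub_self, Int.cast_natCast] at hdiag
    rw [hdiag, chebAux_two_mul_cos_pi_div_self (by omega)]
  exact ⟨hm0, fun hpos => (hpos 0 n (by omega)).ne' hm0⟩
end

section
/- Positivity from quiddity bound: if (m_{i,j}) is an infinite frieze pattern over ℝ with all quiddity entries m_{i,i+2} ≥ 2, then m_{i,j} > 0 for all j > i; moreover m_{i,j} ≥ m_{i,j−1} for all j ≥ i+1 (the diagonals are weakly increasing). -/
open Real

/-!
Along a diagonal `n ↦ m i (i + n)` the frieze satisfies `u (n + 2) = c n * u (n + 1) - u n`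
with `c n ≥ 2`, so `u (n + 2) - u (n + 1) = (c n - 2) * u (n + 1) + (u (n + 1) - u n)`:
as long as the terms are nonnegative the increments do not decrease. The first increment is
`m i (i + 1) - m i i = 1`, hence every increment is at least `1`, which gives both monotonicity
and `m i j ≥ j - i > 0`.
-/

section SecondOrderRecurrence

variable {u c : ℕ → ℝ}

theorem sub_le_sub_of_recurrence {n : ℕ} (hc : 2 ≤ c n)
    (hrec : u (n + 2) = c n * u (n + 1) - u n) (hu : 0 ≤ u (n + 1)) :
    u (n + 1) - u n ≤ u (n + 2) - u (n + 1) := by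
  rw [hrec]
  nlinarith

theorem nonneg_and_add_one_le_of_recurrence (hc : ∀ n, 2 ≤ c n)
    (hrec : ∀ n, u (n + 2) = c n * u (n + 1) - u n) (h0 : 0 ≤ u 0) (h1 : u 0 + 1 ≤ u 1) :
    ∀ n, 0 ≤ u n ∧ u n + 1 ≤ u (n + 1) := by
  intro n
  induction n with
  | zero => exact ⟨h0, h1⟩
  | succ n ih =>
    obtain ⟨hnonneg, hstep⟩ := ih
    have hnext : 0 ≤ u (n + 1) := by linarith
    exact ⟨hnext, by linarith [sub_le_sub_of_recurrence (hc n) (hrec n) hnext]⟩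

end SecondOrderRecurrence

section Frieze

variable {m : ℤ → ℤ → ℝ}

theorem frieze_diagonal_recurrence
    (hrec : ∀ i j : ℤ, i + 2 ≤ j → m i j = m (j - 2) j * m i (j - 1) - m i (j - 2))
    (i : ℤ) (n : ℕ) :
    m i (i + ↑(n + 2)) = m (i + n) (i + n + 2) * m i (i + ↑(n + 1)) - m i (i + n) := by
  have h := hrec i (i + n + 2) (by omega)
  rw [show i + n + 2 - 2 = i + n by ring, show i + n + 2 - 1 = i + ↑(n + 1) by push_cast; ring] at h
  rwa [show i + ↑(n + 2) = i + n + 2 by push_cast; ring]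

theorem frieze_diagonal_nonneg_and_add_one_le
    (h0 : ∀ i : ℤ, m i i = 0) (h1 : ∀ i : ℤ, m i (i + 1) = 1)
    (hrec : ∀ i j : ℤ, i + 2 ≤ j → m i j = m (j - 2) j * m i (j - 1) - m i (j - 2))
    (hq : ∀ i : ℤ, 2 ≤ m i (i + 2)) (i : ℤ) (n : ℕ) :
    0 ≤ m i (i + n) ∧ m i (i + n) + 1 ≤ m i (i + ↑(n + 1)) :=
  nonneg_and_add_one_le_of_recurrence (u := fun n : ℕ ↦ m i (i + n)) (fun n ↦ hq (i + n))
    (frieze_diagonal_recurrence hrec i) (by simp [h0]) (by simp [h0, h1]) n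

end Frieze

/-- Positivity from quiddity bound: if all quiddity entries are ≥ 2, then all entries
m_{i,j} with j > i are positive and the diagonals are weakly increasing. -/
theorem quiddity_ge_two_positive (m : ℤ → ℤ → ℝ)
    (h0 : ∀ i : ℤ, m i i = 0) (h1 : ∀ i : ℤ, m i (i + 1) = 1)
    (hrec : ∀ i j : ℤ, i + 2 ≤ j → m i j = m (j - 2) j * m i (j - 1) - m i (j - 2))
    (hq : ∀ i : ℤ, 2 ≤ m i (i + 2)) :
    (∀ i j : ℤ, i < j → 0 < m i j) ∧ (∀ i j : ℤ, i + 1 ≤ j → m i (j - 1) ≤ m i j) := by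
  have diagonal := frieze_diagonal_nonneg_and_add_one_le h0 h1 hrec hq
  refine ⟨fun i j hij ↦ ?_, fun i j hij ↦ ?_⟩ <;>
    obtain ⟨n, rfl⟩ : ∃ n : ℕ, j = i + ↑(n + 1) := ⟨(j - i - 1).toNat, by omega⟩ <;>
    obtain ⟨hnonneg, hstep⟩ := diagonal i n
  · linarith
  · rw [show i + ↑(n + 1) - 1 = i + n by push_cast; ring]
    linarith
end

section
/- If s_0 = 2, s_1 ≥ 2 are reals and s_{k+1} = s_1·s_k − s_{k−1} for k ≥ 1, then s_k ≥ 2 for all k ≥ 0. -/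
open Real

section Recurrence

variable {R : Type*} [CommRing R] [LinearOrder R] [IsStrictOrderedRing R]
  {c : R} {u : ℕ → R}

/-- The increments satisfy `Δ(n+1) = (c - 2) u(n+1) + Δ n`, so they stay nonnegative
while `u` does, and `u` stays nonnegative while it increases. -/
theorem monotone_of_two_le_of_recurrence (hc : 2 ≤ c)
    (hrec : ∀ n, u (n + 2) = c * u (n + 1) - u n) (h0 : 0 ≤ u 0) (h01 : u 0 ≤ u 1) :
    Monotone u := by
  have step : ∀ n, 0 ≤ u n ∧ u n ≤ u (n + 1) := by
    intro n
    induction n with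
    | zero => exact ⟨h0, h01⟩
    | succ n ih =>
      obtain ⟨hpos, hle⟩ := ih
      have hpos' : 0 ≤ u (n + 1) := hpos.trans hle
      have hincr : u (n + 2) - u (n + 1) = (c - 2) * u (n + 1) + (u (n + 1) - u n) := by
        rw [hrec]; ring
      refine ⟨hpos', sub_nonneg.mp ?_⟩
      rw [hincr]
      exact add_nonneg (mul_nonneg (sub_nonneg.mpr hc) hpos') (sub_nonneg.mpr hle)
  exact monotone_nat_of_le_succ fun n => (step n).2

end Recurrence

/-- If s_0 = 2, s_1 ≥ 2 and s_{k+1} = s_1 s_k − s_{k-1}, then s_k ≥ 2 for all k. -/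
theorem growth_coefficients_ge_two (s : ℕ → ℝ) (h0 : s 0 = 2) (h1 : 2 ≤ s 1)
    (hrec : ∀ k : ℕ, 1 ≤ k → s (k + 1) = s 1 * s k - s (k - 1)) :
    ∀ k : ℕ, 2 ≤ s k := by
  have hrec' : ∀ n, s (n + 2) = s 1 * s (n + 1) - s n := fun n =>
    hrec (n + 1) (Nat.le_add_left 1 n)
  have hmono : Monotone s :=
    monotone_of_two_le_of_recurrence h1 hrec' (by rw [h0]; norm_num) (h0 ▸ h1)
  intro k
  exact h0 ▸ hmono (Nat.zero_le k)
end

section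
/- A finite frieze pattern of width p−3 is produced by the constant quiddity value λ_p: if m_{i,j} := U_{j−i−1}(λ_p) for 0 ≤ j−i ≤ p, then m_{i,i}=0, m_{i,i+1}=1, all entries m_{i,j} with i+1 ≤ j ≤ i+p−1 are positive, m_{i,i+p−1} = 1, and m_{i,i+p} = 0. -/
open Real

/-! Writing `λ_p = 2 cos θ` with `θ = π / p`, the recurrence of `U` is that of `sin ((k + 1) θ) / sin θ`,
so `m i j = sin ((j - i) π / p) / sin (π / p)`: this vanishes for `j - i ∈ {0, p}`, equals `1` for
`j - i ∈ {1, p - 1}` (as `sin (π - θ) = sin θ`) and is positive for `0 < j - i < p`. -/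

open Polynomial.Chebyshev

theorem chebAux_eq_eval_S (n : ℕ) (x : ℝ) : chebAux n x = (S ℝ (n - 1)).eval x := by
  induction n using Nat.twoStepInduction with
  | zero => simp [chebAux]
  | one => simp [chebAux]
  | more n ih₀ ih₁ =>
    have hidx : ((n + 2 : ℕ) : ℤ) - 1 = (n - 1) + 2 := by push_cast; ring
    rw [chebAux, ih₀, ih₁, hidx, S_add_two]
    simp

theorem chebU_eq_eval_S (k : ℤ) (x : ℝ) : chebU k x = (S ℝ k).eval x := by
  unfold chebU
  split_ifs with hk
  · rw [chebAux_eq_eval_S, Int.toNat_of_nonneg hk, add_sub_cancel_right]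
  · rw [chebAux_eq_eval_S, Int.toNat_of_nonneg (by omega), ← Polynomial.eval_neg,
      ← S_neg_sub_one]
    congr 3
    ring

theorem chebU_two_mul_cos {θ : ℝ} (hθ : sin θ ≠ 0) (k : ℤ) :
    chebU k (2 * cos θ) = sin ((k + 1) * θ) / sin θ := by
  rw [chebU_eq_eval_S, eq_div_iff hθ, S_two_mul_real_cos]

/-- The constant quiddity value lambda_p produces a finite frieze pattern of width p−3:
boundary rows of 0's and 1's, positive entries in between, with m_{i,i+p-1} = 1 and
m_{i,i+p} = 0. -/
theorem constant_lambda_p_finite_frieze (p : ℤ) (hp : 3 ≤ p) (m : ℤ → ℤ → ℝ)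
    (hm : ∀ i j : ℤ, m i j = chebU (j - i - 1) (2 * Real.cos (Real.pi / p))) :
    (∀ i : ℤ, m i i = 0) ∧ (∀ i : ℤ, m i (i + 1) = 1) ∧
    (∀ i j : ℤ, i + 1 ≤ j → j ≤ i + p - 1 → 0 < m i j) ∧
    (∀ i : ℤ, m i (i + p - 1) = 1) ∧ (∀ i : ℤ, m i (i + p) = 0) := by
  have hp₀ : (0 : ℝ) < p := by exact_mod_cast (by omega : (0 : ℤ) < p)
  have hθ : 0 < π / p := by positivity
  have hsin : 0 < sin (π / p) :=
    sin_pos_of_pos_of_lt_pi hθ (div_lt_self pi_pos (by exact_mod_cast (by omega : (1 : ℤ) < p)))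
  have hpθ : (p : ℝ) * (π / p) = π := mul_div_cancel₀ _ hp₀.ne'
  have entry : ∀ i j, m i j = sin (((j - i : ℤ) : ℝ) * (π / p)) / sin (π / p) := by
    intro i j
    rw [hm, chebU_two_mul_cos hsin.ne']
    push_cast
    ring_nf
  refine ⟨fun i => ?_, fun i => ?_, fun i j hij hjp => ?_, fun i => ?_, fun i => ?_⟩ <;> rw [entry]
  · simp
  · simp [hsin.ne']
  · have hpos : (0 : ℝ) < (j - i : ℤ) := by exact_mod_cast (by omega : (0 : ℤ) < j - i)
    have hlt : ((j - i : ℤ) : ℝ) < p := by exact_mod_cast (by omega : j - i < p)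
    refine div_pos (sin_pos_of_pos_of_lt_pi (mul_pos hpos hθ) ?_) hsin
    exact (mul_lt_mul_of_pos_right hlt hθ).trans_eq hpθ
  · have : ((i + p - 1 - i : ℤ) : ℝ) * (π / p) = π - π / p := by push_cast; linarith
    rw [this, sin_pi_sub, div_self hsin.ne']
  · have : ((i + p - i : ℤ) : ℝ) * (π / p) = π := by push_cast; linarith
    rw [this, sin_pi, zero_div]
end

section
/- For integers p ≥ 3, q ≥ 3, the 2-periodic frieze pattern with quiddity cycle (λ_p + λ_q, λ_p + λ_q) (i.e., constant quiddity value λ_p + λ_q) has all entries positive, since λ_p + λ_q ≥ 2. -/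
open Real

/-! `λ_p + λ_q ≥ 2` because `cos (π / p) ≥ cos (π / 3) = 1/2`. Each row of the frieze is the
Chebyshev sequence `U_{n-1}(a)` in the constant quiddity `a`, and for `a ≥ 2` its consecutive
differences never decrease, so they stay `≥ 1` and the sequence grows at least linearly. -/

theorem one_half_le_cos_pi_div {x : ℝ} (hx : 3 ≤ x) : 1 / 2 ≤ cos (π / x) := by
  rw [← cos_pi_div_three]
  apply cos_le_cos_of_nonneg_of_le_pi (by positivity) (by linarith [pi_pos])
  exact div_le_div_of_nonneg_left pi_pos.le (by norm_num) hx

theorem chebAux_add_one_le_chebAux_succ {x : ℝ} (hx : 2 ≤ x) (n : ℕ) :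
    chebAux n x + 1 ≤ chebAux (n + 1) x := by
  suffices h : ∀ n, 0 ≤ chebAux n x ∧ chebAux n x + 1 ≤ chebAux (n + 1) x from (h n).2
  intro n
  induction n with
  | zero => simp [chebAux]
  | succ n ih =>
    obtain ⟨hnonneg, hstep⟩ := ih
    have hnonneg' : 0 ≤ chebAux (n + 1) x := by linarith
    refine ⟨hnonneg', ?_⟩
    -- `U(n+2) - U(n+1) = (x - 2) U(n+1) + (U(n+1) - U(n))`
    rw [chebAux]
    nlinarith

theorem natCast_le_chebAux {x : ℝ} (hx : 2 ≤ x) (n : ℕ) : (n : ℝ) ≤ chebAux n x := by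
  induction n with
  | zero => simp [chebAux]
  | succ n ih =>
    push_cast
    linarith [chebAux_add_one_le_chebAux_succ hx n]

theorem chebAux_pos {x : ℝ} (hx : 2 ≤ x) {n : ℕ} (hn : n ≠ 0) : 0 < chebAux n x :=
  lt_of_lt_of_le (Nat.cast_pos.mpr (Nat.pos_of_ne_zero hn)) (natCast_le_chebAux hx n)

theorem eq_chebAux_of_recurrence {a : ℝ} {f : ℤ → ℝ} {i : ℤ} (h0 : f i = 0) (h1 : f (i + 1) = 1)
    (hrec : ∀ j, i + 2 ≤ j → f j = a * f (j - 1) - f (j - 2)) :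
    ∀ n : ℕ, f (i + n) = chebAux n a
  | 0 => by simpa [chebAux] using h0
  | 1 => by simpa [chebAux] using h1
  | n + 2 => by
    rw [hrec _ (by omega), chebAux, ← eq_chebAux_of_recurrence h0 h1 hrec (n + 1),
      ← eq_chebAux_of_recurrence h0 h1 hrec n]
    push_cast
    ring_nf

/-- For p, q ≥ 3, lambda_p + lambda_q ≥ 2, so the frieze pattern with constant quiddity
value lambda_p + lambda_q has all entries positive. -/
theorem two_lambda_quiddity_positive (p q : ℤ) (hp : 3 ≤ p) (hq : 3 ≤ q)
    (m : ℤ → ℤ → ℝ)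
    (h0 : ∀ i : ℤ, m i i = 0) (h1 : ∀ i : ℤ, m i (i + 1) = 1)
    (hrec : ∀ i j : ℤ, i + 2 ≤ j →
      m i j = (2 * Real.cos (Real.pi / p) + 2 * Real.cos (Real.pi / q)) * m i (j - 1)
        - m i (j - 2)) :
    2 ≤ 2 * Real.cos (Real.pi / p) + 2 * Real.cos (Real.pi / q) ∧
    ∀ i j : ℤ, i < j → 0 < m i j := by
  have ha : 2 ≤ 2 * cos (π / p) + 2 * cos (π / q) := by
    linarith [one_half_le_cos_pi_div (x := p) (by exact_mod_cast hp),
      one_half_le_cos_pi_div (x := q) (by exact_mod_cast hq)]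
  refine ⟨ha, fun i j hij => ?_⟩
  obtain ⟨n, rfl⟩ : ∃ n : ℕ, j = i + n := ⟨(j - i).toNat, by omega⟩
  rw [eq_chebAux_of_recurrence (h0 i) (h1 i) (hrec i)]
  exact chebAux_pos ha (by omega)
end
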